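/- Let G be an n-vertex DAG, let ℓ be an integer with 1 ≤ ℓ ≤ n, and let 𝒞 be an ℓ-chain cover of G. Then there exists a set 𝒞* of at most 2ℓ pairwise vertex-disjoint chains of G, each containing at most ⌈n/ℓ⌉ vertices, such that the union of the vertex sets of the chains of 𝒞* equals the union of the vertex sets of the chains of 𝒞 (in particular, every directed path in G contains at most 2n/ℓ vertices lying on no chain of 𝒞*). -/

import Mathlib

open scoped Classical

/-- An edge of a directed graph on vertex set `Fin n`. -/
abbrev Edge (n : ℕ) := Fin n × Fin n

/-- `l` is a directed path in the graph with edge set `E`: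
a sequence of distinct vertices, each consecutive pair joined by an edge. -/
def IsPathList {n : ℕ} (E : Set (Edge n)) (l : List (Fin n)) : Prop :=
  l.Nodup ∧ l.Chain' (fun a b => (a, b) ∈ E)

/-- `l` is a directed path from `u` to `v` in the graph with edge set `E`. -/
def IsPathFromTo {n : ℕ} (E : Set (Edge n)) (u v : Fin n) (l : List (Fin n)) : Prop :=
  IsPathList E l ∧ l.head? = some u ∧ l.getLast? = some v

/-- `hdist E u v` is the minimum number of edges on a directed path from `u` to `v`
(`⊤` if no such path exists). -/
noncomputable def hdist {n : ℕ} (E : Set (Edge n)) (u v : Fin n) : ℕ∞ :=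
  sInf {k : ℕ∞ | ∃ l : List (Fin n), IsPathFromTo E u v l ∧ (l.length : ℕ∞) = k + 1}

/-- `(u, v)` is in the transitive closure: `u ≠ v` and `v` is reachable from `u`. -/
def TCrel {n : ℕ} (E : Set (Edge n)) (u v : Fin n) : Prop :=
  u ≠ v ∧ ∃ l : List (Fin n), IsPathFromTo E u v l

/-- The transitive closure of the graph with edge set `E`, as a set of pairs. -/
def TCset {n : ℕ} (E : Set (Edge n)) : Set (Edge n) := {p | TCrel E p.1 p.2}

/-- `H` is a shortcut set with hopbound `β` for the graph with edge set `E`. -/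
def IsShortcutSet {n : ℕ} (E H : Set (Edge n)) (β : ℕ) : Prop :=
  H ⊆ TCset E ∧ ∀ p ∈ TCset E, hdist (E ∪ H) p.1 p.2 ≤ (β : ℕ∞)

/-- Reachability in the graph with edge set `E`. -/
def Reaches {n : ℕ} (E : Set (Edge n)) (u v : Fin n) : Prop :=
  Relation.ReflTransGen (fun a b => (a, b) ∈ E) u v

/-- A DAG: a directed graph with no directed cycles. -/
def IsDAG {n : ℕ} (E : Set (Edge n)) : Prop :=
  ∀ u v : Fin n, (u, v) ∈ E → ¬ Reaches E v u

/-- A chain: a sequence of distinct vertices each consecutive pair of which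
lies in the transitive closure. -/
def IsChainIn {n : ℕ} (E : Set (Edge n)) (C : List (Fin n)) : Prop :=
  C.Nodup ∧ C.Chain' (fun a b => TCrel E a b)

/-- An `ℓ`-chain cover: a set of at most `ℓ` pairwise vertex-disjoint chains such that
every directed path contains at most `2n/ℓ` vertices lying on no chain. -/
def IsChainCover {n : ℕ} (E : Set (Edge n)) (ℓ : ℕ) (𝒞 : Set (List (Fin n))) : Prop :=
  𝒞.Finite ∧ 𝒞.ncard ≤ ℓ ∧ (∀ C ∈ 𝒞, IsChainIn E C) ∧
  (∀ C₁ ∈ 𝒞, ∀ C₂ ∈ 𝒞, C₁ ≠ C₂ → ∀ x : Fin n, x ∈ C₁ → x ∉ C₂) ∧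
  ∀ P : List (Fin n), IsPathList E P →
    ({x : Fin n | x ∈ P ∧ ∀ C ∈ 𝒞, x ∉ C}.ncard : ℝ) ≤ 2 * n / ℓ

/-!
Cut every chain of `𝒞` into consecutive blocks of `m = ⌈n/ℓ⌉` vertices. A block of a chain is
again a chain, and the blocks of `𝒞` cover exactly the vertices covered by `𝒞`, so the path
condition is inherited. A chain with `k` vertices gives `k / m + 1` blocks; as the chains of `𝒞`
are disjoint their lengths add up to at most `n ≤ m ℓ`, so there are at most `ℓ + ℓ` blocks.
-/

namespace List

variable {α : Type*}

theorem infix_of_mem_splitLengths {sz : List ℕ} {l c : List α} (h : c ∈ sz.splitLengths l) :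
    c <:+: l := by
  induction sz generalizing l with
  | nil => simp at h
  | cons k sz ih =>
    rcases mem_cons.1 (splitLengths_cons l sz k ▸ h) with rfl | h
    · exact (take_prefix k l).isInfix
    · exact (ih h).trans (drop_suffix k l).isInfix

/-- The trailing blocks may be empty: `l.length / m + 1` blocks of size `m` always suffice. -/
def blocks (m : ℕ) (l : List α) : List (List α) :=
  (replicate (l.length / m + 1) m).splitLengths l

variable {m : ℕ} {l c c₁ c₂ : List α}

theorem length_blocks (m : ℕ) (l : List α) : (blocks m l).length = l.length / m + 1 := by
  simp [blocks]

theorem flatten_blocks (hm : 0 < m) (l : List α) : (blocks m l).flatten = l :=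
  flatten_splitLengths _ _ <| by
    simpa [Nat.add_mul] using (Nat.lt_div_mul_add hm).le

theorem length_le_of_mem_blocks (h : c ∈ blocks m l) : c.length ≤ m :=
  length_mem_splitLengths l _ m (fun _ hk => (eq_of_mem_replicate hk).le) c h

theorem infix_of_mem_blocks (h : c ∈ blocks m l) : c <:+: l :=
  infix_of_mem_splitLengths h

theorem exists_mem_blocks_iff (hm : 0 < m) (l : List α) (x : α) :
    (∃ c ∈ blocks m l, x ∈ c) ↔ x ∈ l := by
  rw [← mem_flatten, flatten_blocks hm]

theorem Nodup.disjoint_of_mem_blocks (hl : l.Nodup) (hm : 0 < m) (h₁ : c₁ ∈ blocks m l)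
    (h₂ : c₂ ∈ blocks m l) (hne : c₁ ≠ c₂) : Disjoint c₁ c₂ := by
  have : Std.Symm (α := List α) Disjoint := ⟨fun _ _ => Disjoint.symm⟩
  rw [← flatten_blocks hm l, nodup_flatten] at hl
  exact hl.2.forall h₁ h₂ hne

end List

namespace Finset

variable {α : Type*} [DecidableEq α] {m : ℕ} {𝒮 : Finset (List α)}

def blocks (m : ℕ) (𝒮 : Finset (List α)) : Finset (List α) :=
  𝒮.biUnion fun C => (C.blocks m).toFinset

theorem mem_blocks {c : List α} : c ∈ 𝒮.blocks m ↔ ∃ C ∈ 𝒮, c ∈ C.blocks m := by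
  simp [blocks]

theorem card_blocks_le : #(𝒮.blocks m) ≤ ∑ C ∈ 𝒮, (C.length / m + 1) :=
  card_biUnion_le.trans <| sum_le_sum fun C _ =>
    (List.toFinset_card_le _).trans_eq (List.length_blocks m C)

theorem exists_mem_blocks_iff (hm : 0 < m) (x : α) :
    (∃ c ∈ 𝒮.blocks m, x ∈ c) ↔ ∃ C ∈ 𝒮, x ∈ C := by
  simp only [mem_blocks]
  constructor
  · rintro ⟨c, ⟨C, hC, hc⟩, hx⟩
    exact ⟨C, hC, (List.infix_of_mem_blocks hc).subset hx⟩
  · rintro ⟨C, hC, hx⟩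
    obtain ⟨c, hc, hxc⟩ := (List.exists_mem_blocks_iff hm C x).2 hx
    exact ⟨c, ⟨C, hC, hc⟩, hxc⟩

theorem pairwise_disjoint_blocks (hm : 0 < m) (hnodup : ∀ C ∈ 𝒮, C.Nodup)
    (hdisj : (𝒮 : Set (List α)).Pairwise List.Disjoint) :
    (𝒮.blocks m : Set (List α)).Pairwise List.Disjoint := by
  intro c₁ h₁ c₂ h₂ hne
  obtain ⟨C₁, hC₁, hc₁⟩ := mem_blocks.1 h₁
  obtain ⟨C₂, hC₂, hc₂⟩ := mem_blocks.1 h₂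
  obtain rfl | hC := eq_or_ne C₁ C₂
  · exact (hnodup C₁ hC₁).disjoint_of_mem_blocks hm hc₁ hc₂ hne
  · exact fun x hx₁ hx₂ => hdisj hC₁ hC₂ hC
      ((List.infix_of_mem_blocks hc₁).subset hx₁) ((List.infix_of_mem_blocks hc₂).subset hx₂)

theorem sum_length_le_card [Fintype α] (hnodup : ∀ C ∈ 𝒮, C.Nodup)
    (hdisj : (𝒮 : Set (List α)).Pairwise List.Disjoint) :
    ∑ C ∈ 𝒮, C.length ≤ Fintype.card α :=
  calc ∑ C ∈ 𝒮, C.length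
      = ∑ C ∈ 𝒮, #C.toFinset :=
        sum_congr rfl fun C hC => (List.toFinset_card_of_nodup (hnodup C hC)).symm
    _ = #(𝒮.biUnion List.toFinset) := (card_biUnion fun _ h₁ _ h₂ hne =>
        disjoint_left.2 fun _ hx₁ hx₂ =>
          hdisj h₁ h₂ hne (List.mem_toFinset.1 hx₁) (List.mem_toFinset.1 hx₂)).symm
    _ ≤ Fintype.card α := card_le_univ _

theorem card_blocks_le_two_mul [Fintype α] {ℓ : ℕ} (hm : 0 < m) (hnodup : ∀ C ∈ 𝒮, C.Nodup)
    (hdisj : (𝒮 : Set (List α)).Pairwise List.Disjoint) (hcard : #𝒮 ≤ ℓ)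
    (hα : Fintype.card α ≤ m * ℓ) : #(𝒮.blocks m) ≤ 2 * ℓ := by
  have hfloor : (∑ C ∈ 𝒮, C.length / m) * m ≤ ℓ * m :=
    calc (∑ C ∈ 𝒮, C.length / m) * m
        = ∑ C ∈ 𝒮, C.length / m * m := sum_mul ..
      _ ≤ ∑ C ∈ 𝒮, C.length := sum_le_sum fun C _ => Nat.div_mul_le_self _ _
      _ ≤ ℓ * m := by linarith [sum_length_le_card hnodup hdisj]
  calc #(𝒮.blocks m)
      ≤ ∑ C ∈ 𝒮, (C.length / m + 1) := card_blocks_le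
    _ = ∑ C ∈ 𝒮, C.length / m + #𝒮 := by rw [sum_add_distrib, card_eq_sum_ones]
    _ ≤ ℓ + ℓ := add_le_add (Nat.le_of_mul_le_mul_right hfloor hm) hcard
    _ = 2 * ℓ := (two_mul ℓ).symm

end Finset

theorem IsChainIn.infix {n : ℕ} {E : Set (Edge n)} {C D : List (Fin n)} (hC : IsChainIn E C)
    (h : D <:+: C) : IsChainIn E D :=
  ⟨hC.1.sublist h.sublist, List.IsChain.infix hC.2 h⟩

theorem Nat.le_ceil_div_mul (n ℓ : ℕ) (hℓ : 0 < ℓ) : n ≤ ⌈(n : ℝ) / ℓ⌉₊ * ℓ := by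
  have hℓ' : (0 : ℝ) < ℓ := by exact_mod_cast hℓ
  exact_mod_cast (div_le_iff₀ hℓ').1 (Nat.le_ceil ((n : ℝ) / ℓ))

/-- Given an `ℓ`-chain cover `𝒞` of an `n`-vertex DAG `G` (`1 ≤ ℓ ≤ n`),
there is a set `𝒞*` of at most `2ℓ` pairwise vertex-disjoint chains, each with at most
`⌈n/ℓ⌉` vertices, whose union of vertex sets equals that of `𝒞` (in particular, every
directed path contains at most `2n/ℓ` vertices lying on no chain of `𝒞*`). -/
theorem split_up_chains :
    ∀ (n : ℕ) (E : Set (Edge n)), IsDAG E →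
      ∀ ℓ : ℕ, 1 ≤ ℓ → ℓ ≤ n →
        ∀ 𝒞 : Set (List (Fin n)), IsChainCover E ℓ 𝒞 →
          ∃ 𝒞' : Set (List (Fin n)),
            𝒞'.Finite ∧ 𝒞'.ncard ≤ 2 * ℓ ∧
            (∀ C ∈ 𝒞', IsChainIn E C) ∧
            (∀ C₁ ∈ 𝒞', ∀ C₂ ∈ 𝒞', C₁ ≠ C₂ → ∀ x : Fin n, x ∈ C₁ → x ∉ C₂) ∧
            (∀ C ∈ 𝒞', C.length ≤ ⌈(n : ℝ) / (ℓ : ℝ)⌉₊) ∧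
            ({x : Fin n | ∃ C ∈ 𝒞', x ∈ C} = {x : Fin n | ∃ C ∈ 𝒞, x ∈ C}) ∧
            (∀ P : List (Fin n), IsPathList E P →
              ({x : Fin n | x ∈ P ∧ ∀ C ∈ 𝒞', x ∉ C}.ncard : ℝ) ≤ 2 * n / ℓ) := by
  intro n E _ ℓ hℓ hℓn 𝒞 ⟨hfin, hcard, hchain, hdisj, hpath⟩
  set m := ⌈(n : ℝ) / (ℓ : ℝ)⌉₊
  have hnm : n ≤ m * ℓ := Nat.le_ceil_div_mul n ℓ hℓ
  have hm : 0 < m := Nat.pos_of_mul_pos_right (by omega : 0 < m * ℓ)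
  have hmem : ∀ {C}, C ∈ hfin.toFinset ↔ C ∈ 𝒞 := hfin.mem_toFinset
  have hnodup : ∀ C ∈ hfin.toFinset, C.Nodup := fun C hC => (hchain C (hmem.1 hC)).1
  have hdisj' : (hfin.toFinset : Set (List (Fin n))).Pairwise List.Disjoint := by
    rw [hfin.coe_toFinset]
    exact fun C₁ h₁ C₂ h₂ hne => hdisj C₁ h₁ C₂ h₂ hne
  have hunion : ∀ x, (∃ c ∈ hfin.toFinset.blocks m, x ∈ c) ↔ ∃ C ∈ 𝒞, x ∈ C := fun x => by
    simp only [Finset.exists_mem_blocks_iff hm, hmem]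
  refine ⟨hfin.toFinset.blocks m, Finset.finite_toSet _, ?_, fun c hc => ?_,
    fun c₁ h₁ c₂ h₂ hne x hx₁ =>
      Finset.pairwise_disjoint_blocks hm hnodup hdisj' h₁ h₂ hne hx₁,
    fun c hc => List.length_le_of_mem_blocks (Finset.mem_blocks.1 hc).choose_spec.2,
    Set.ext hunion, fun P hP => ?_⟩
  · rw [Set.ncard_coe_finset]
    refine Finset.card_blocks_le_two_mul hm hnodup hdisj' ?_ (by simpa using hnm)
    rwa [← Set.ncard_eq_toFinset_card 𝒞 hfin]
  · obtain ⟨C, hC, hc⟩ := Finset.mem_blocks.1 hc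
    exact (hchain C (hmem.1 hC)).infix (List.infix_of_mem_blocks hc)
  · convert hpath P hP using 4
    ext x
    have := (hunion x).not
    push Not at this
    simp only [Finset.mem_coe, this]
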